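/- Fix t ∈ [0,T) and let g(s) := e^{−(r+λ)(T−t)}·(φ(d2(t,s))/(σ√(T−t)) − Φ(d2(t,s))) for s > 0. Then g(s) → 0 as s → 0⁺, g(s) → −e^{−(r+λ)(T−t)} as s → ∞, and g changes sign: there exist 0 < s₁ < s₂ such that g(s₁) > 0 > g(s₂). (Hence the digital call's drift function G(t,s) = (λ̃ − λ)·g(s) has horizontal asymptote 0 at s = 0⁺, tends to a constant of sign (λ − λ̃) as s → ∞, and changes sign, so the digital call's purchase boundary is nontrivial.) -/

import Mathlib

/-!
As `s` runs over `(0, ∞)`, `d₂(t,s)` increases from `-∞` to `∞`, so the limits of `g` are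
`e^{−(r+λ)(T−t)}` times those of `φ(d)/c − Φ(d)` (with `c = σ√(T−t)`) at `d → ∓∞`, namely `0`
and `-1`. The sign change comes from the left tail: Mills' bound `Φ(d) ≤ φ(d)/|d|` for `d < 0`
gives `Φ(d) < φ(d)/c` at `d = −(c+1)`.
-/

open Real Filter

/-- Standard normal density `φ`. -/
noncomputable def stdNormalPDF (x : ℝ) : ℝ := Real.exp (-(x ^ 2 / 2)) / Real.sqrt (2 * Real.pi)

/-- Standard normal cumulative distribution function `Φ`. -/
noncomputable def stdNormalCDF (x : ℝ) : ℝ := ∫ u in Set.Iic x, stdNormalPDF u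

/-- `d₂(t,s) = (log(s/K) + (r + λ − σ²/2)(T − t)) / (σ√(T − t))`. -/
noncomputable def d2 (r lam sigma K T t s : ℝ) : ℝ :=
  (Real.log (s / K) + (r + lam - sigma ^ 2 / 2) * (T - t)) / (sigma * Real.sqrt (T - t))

/-- `g(s) = e^{−(r+λ)(T−t)}·(φ(d₂(t,s))/(σ√(T−t)) − Φ(d₂(t,s)))`: the factor of
the digital call's drift function `G(t,s) = (λ̃ − λ)·g(s)`. -/
noncomputable def digitalDriftFactor (r lam sigma K T t s : ℝ) : ℝ :=
  Real.exp (-((r + lam) * (T - t)))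
    * (stdNormalPDF (d2 r lam sigma K T t s) / (sigma * Real.sqrt (T - t))
        - stdNormalCDF (d2 r lam sigma K T t s))

open MeasureTheory ProbabilityTheory Set Topology

lemma stdNormalPDF_pos (x : ℝ) : 0 < stdNormalPDF x := by
  unfold stdNormalPDF
  positivity

lemma stdNormalPDF_eq_gaussianPDFReal : stdNormalPDF = gaussianPDFReal 0 1 := by
  ext x
  simp [stdNormalPDF, gaussianPDFReal, div_eq_inv_mul]

lemma integrable_stdNormalPDF : Integrable stdNormalPDF :=
  stdNormalPDF_eq_gaussianPDFReal ▸ integrable_gaussianPDFReal 0 1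

lemma stdNormalCDF_eq_cdf : stdNormalCDF = cdf (gaussianReal 0 1) := by
  ext x
  rw [cdf_eq_real, measureReal_def, gaussianReal_apply_eq_integral 0 one_ne_zero,
    ENNReal.toReal_ofReal
      (setIntegral_nonneg measurableSet_Iic fun u _ ↦ gaussianPDFReal_nonneg 0 1 u),
    ← stdNormalPDF_eq_gaussianPDFReal, stdNormalCDF]

lemma tendsto_stdNormalCDF_atBot : Tendsto stdNormalCDF atBot (𝓝 0) :=
  stdNormalCDF_eq_cdf ▸ tendsto_cdf_atBot _

lemma tendsto_stdNormalCDF_atTop : Tendsto stdNormalCDF atTop (𝓝 1) :=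
  stdNormalCDF_eq_cdf ▸ tendsto_cdf_atTop _

lemma tendsto_stdNormalPDF_cocompact : Tendsto stdNormalPDF (cocompact ℝ) (𝓝 0) := by
  have h := (tendsto_rpow_abs_mul_exp_neg_mul_sq_cocompact one_half_pos 0).div_const √(2 * π)
  rw [zero_div] at h
  refine h.congr fun x ↦ ?_
  simp only [rpow_zero, one_mul, stdNormalPDF]
  ring_nf

lemma hasDerivAt_stdNormalPDF (x : ℝ) : HasDerivAt stdNormalPDF (-x * stdNormalPDF x) x := by
  have h : HasDerivAt (fun x ↦ rexp (-(x ^ 2 / 2))) (rexp (-(x ^ 2 / 2)) * -x) x := by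
    simpa using ((hasDerivAt_pow 2 x).div_const 2).neg.exp
  refine (h.div_const √(2 * π)).congr_deriv ?_
  unfold stdNormalPDF
  ring

lemma integrable_neg_mul_stdNormalPDF : Integrable fun x ↦ -x * stdNormalPDF x := by
  refine ((integrable_mul_exp_neg_mul_sq one_half_pos).neg.div_const √(2 * π)).congr
    (ae_of_all _ fun x ↦ ?_)
  simp only [Pi.neg_apply, stdNormalPDF]
  ring_nf

lemma integral_Iic_neg_mul_stdNormalPDF (x : ℝ) :
    ∫ u in Iic x, -u * stdNormalPDF u = stdNormalPDF x := by
  rw [integral_Iic_of_hasDerivAt_of_tendsto' (fun u _ ↦ hasDerivAt_stdNormalPDF u)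
    integrable_neg_mul_stdNormalPDF.integrableOn
    (tendsto_stdNormalPDF_cocompact.mono_left atBot_le_cocompact), sub_zero]

lemma stdNormalCDF_le_stdNormalPDF_div_neg {x : ℝ} (hx : x < 0) :
    stdNormalCDF x ≤ stdNormalPDF x / -x := by
  rw [← integral_Iic_neg_mul_stdNormalPDF, ← integral_div]
  refine setIntegral_mono_on integrable_stdNormalPDF.integrableOn
    (integrable_neg_mul_stdNormalPDF.div_const _).integrableOn measurableSet_Iic fun u hu ↦ ?_
  rw [le_div_iff₀ (neg_pos.2 hx), mul_comm]
  exact mul_le_mul_of_nonneg_right (neg_le_neg hu) (stdNormalPDF_pos u).le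

lemma exists_stdNormalCDF_lt_stdNormalPDF_div {c : ℝ} (hc : 0 < c) :
    ∃ d, stdNormalCDF d < stdNormalPDF d / c := by
  refine ⟨-(c + 1), ?_⟩
  calc stdNormalCDF (-(c + 1)) ≤ stdNormalPDF (-(c + 1)) / (c + 1) := by
        simpa using stdNormalCDF_le_stdNormalPDF_div_neg (x := -(c + 1)) (by linarith)
    _ < stdNormalPDF (-(c + 1)) / c := div_lt_div_of_pos_left (stdNormalPDF_pos _) hc (by linarith)

section d2

variable {r lam sigma K T t : ℝ}

lemma tendsto_d2_nhdsGT_zero (hsigma : 0 < sigma) (hK : 0 < K) (htT : t < T) :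
    Tendsto (d2 r lam sigma K T t) (𝓝[>] 0) atBot := by
  have hdiv : Tendsto (· / K) (𝓝[>] 0) (𝓝[>] 0) := by
    have h := (continuous_id.div_const K).continuousWithinAt.tendsto_nhdsWithin
      (x := 0) (s := Ioi 0) (t := Ioi 0) fun s hs ↦ div_pos hs hK
    rwa [id, zero_div] at h
  exact (tendsto_atBot_add_const_right _ _ (tendsto_log_nhdsGT_zero.comp hdiv)).atBot_div_const
    (mul_pos hsigma (sqrt_pos.2 (sub_pos.2 htT)))

lemma tendsto_d2_atTop (hsigma : 0 < sigma) (hK : 0 < K) (htT : t < T) :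
    Tendsto (d2 r lam sigma K T t) atTop atTop :=
  (tendsto_atTop_add_const_right _ _
    (tendsto_log_atTop.comp (tendsto_id.atTop_div_const hK))).atTop_div_const
    (mul_pos hsigma (sqrt_pos.2 (sub_pos.2 htT)))

lemma exists_d2_eq (hsigma : 0 < sigma) (hK : 0 < K) (htT : t < T) (d : ℝ) :
    ∃ s, 0 < s ∧ d2 r lam sigma K T t s = d := by
  have hc : 0 < sigma * √(T - t) := mul_pos hsigma (sqrt_pos.2 (sub_pos.2 htT))
  refine ⟨K * rexp (sigma * √(T - t) * d - (r + lam - sigma ^ 2 / 2) * (T - t)),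
    by positivity, ?_⟩
  rw [d2, mul_div_cancel_left₀ _ hK.ne', log_exp, sub_add_cancel, mul_div_cancel_left₀ _ hc.ne']

end d2

theorem digitalDriftFactor_sign_change_general
    (r lam sigma K T : ℝ) (hsigma : 0 < sigma)
    (hK : 0 < K) (t : ℝ) (ht : t ∈ Set.Ico (0 : ℝ) T) :
    Tendsto (fun s => digitalDriftFactor r lam sigma K T t s)
        (nhdsWithin 0 (Set.Ioi 0)) (nhds 0)
    ∧ Tendsto (fun s => digitalDriftFactor r lam sigma K T t s)
        atTop (nhds (-Real.exp (-((r + lam) * (T - t)))))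
    ∧ ∃ s₁ s₂ : ℝ, 0 < s₁ ∧ s₁ < s₂
        ∧ digitalDriftFactor r lam sigma K T t s₁ > 0
        ∧ 0 > digitalDriftFactor r lam sigma K T t s₂ := by
  set c := sigma * √(T - t)
  set E := rexp (-((r + lam) * (T - t)))
  have hbot := tendsto_d2_nhdsGT_zero (r := r) (lam := lam) hsigma hK ht.2
  have htop := tendsto_d2_atTop (r := r) (lam := lam) hsigma hK ht.2
  have hlim₀ : Tendsto (digitalDriftFactor r lam sigma K T t) (𝓝[>] 0) (𝓝 0) := by
    have h := (((tendsto_stdNormalPDF_cocompact.comp (hbot.mono_right atBot_le_cocompact)).div_const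
      c).sub (tendsto_stdNormalCDF_atBot.comp hbot)).const_mul E
    rwa [zero_div, sub_zero, mul_zero] at h
  have hlim : Tendsto (digitalDriftFactor r lam sigma K T t) atTop (𝓝 (-E)) := by
    have h := (((tendsto_stdNormalPDF_cocompact.comp (htop.mono_right atTop_le_cocompact)).div_const
      c).sub (tendsto_stdNormalCDF_atTop.comp htop)).const_mul E
    rwa [zero_div, zero_sub, mul_neg, mul_one] at h
  obtain ⟨d, hd⟩ :=
    exists_stdNormalCDF_lt_stdNormalPDF_div (mul_pos hsigma (sqrt_pos.2 (sub_pos.2 ht.2)))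
  obtain ⟨s₁, hs₁, rfl⟩ := exists_d2_eq (r := r) (lam := lam) hsigma hK ht.2 d
  have hpos : digitalDriftFactor r lam sigma K T t s₁ > 0 := mul_pos (exp_pos _) (sub_pos.2 hd)
  obtain ⟨s₂, hneg, hs₁₂⟩ :=
    ((hlim.eventually_lt_const (neg_lt_zero.2 (exp_pos _))).and (eventually_gt_atTop s₁)).exists
  exact ⟨hlim₀, hlim, s₁, s₂, hs₁, hs₁₂, hpos, hneg⟩

/-- **Sign change of the digital call's drift function.**
Fix `t ∈ [0,T)` and let `g(s) := e^{−(r+λ)(T−t)}·(φ(d₂(t,s))/(σ√(T−t)) − Φ(d₂(t,s)))`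
for `s > 0`.  Then `g(s) → 0` as `s → 0⁺`, `g(s) → −e^{−(r+λ)(T−t)}` as `s → ∞`,
and `g` changes sign: there exist `0 < s₁ < s₂` with `g(s₁) > 0 > g(s₂)`.
(Hence the digital call's drift function `G(t,s) = (λ̃ − λ)·g(s)` has horizontal
asymptote `0` at `s = 0⁺`, tends to a constant of sign `(λ − λ̃)` as `s → ∞`, and
changes sign, so the digital call's purchase boundary is nontrivial.) -/
theorem digitalDriftFactor_sign_change
    (r lam sigma K T : ℝ) (hr : 0 ≤ r) (hlam : 0 ≤ lam) (hsigma : 0 < sigma)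
    (hK : 0 < K) (hT : 0 < T) (t : ℝ) (ht : t ∈ Set.Ico (0 : ℝ) T) :
    Tendsto (fun s => digitalDriftFactor r lam sigma K T t s)
        (nhdsWithin 0 (Set.Ioi 0)) (nhds 0)
    ∧ Tendsto (fun s => digitalDriftFactor r lam sigma K T t s)
        atTop (nhds (-Real.exp (-((r + lam) * (T - t)))))
    ∧ ∃ s₁ s₂ : ℝ, 0 < s₁ ∧ s₁ < s₂
        ∧ digitalDriftFactor r lam sigma K T t s₁ > 0
        ∧ 0 > digitalDriftFactor r lam sigma K T t s₂ :=
  digitalDriftFactor_sign_change_general r lam sigma K T hsigma hK t ht
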